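/- If L is a stable triplet cover of a fully-resolved X-tree T with n := |X| ≥ 3, then the graph (X, L) is a 2d-tree. -/

import Mathlib

open SimpleGraph

/-- An `X`-tree: a finite tree whose leaf set is (the image of) `X`,
with no vertices of degree 2. -/
structure XTree (α : Type) (X : Set α) where
  V : Type
  fintypeV : Fintype V
  tree : SimpleGraph V
  isTree : tree.IsTree
  ι : α → V
  ι_injOn : Set.InjOn ι X
  leaf_iff : ∀ v : V, (tree.neighborSet v).ncard = 1 ↔ v ∈ ι '' X
  no_deg_two : ∀ v : V, (tree.neighborSet v).ncard ≠ 2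

namespace XTree

variable {α : Type} {X : Set α}

/-- A vertex is interior if it is not a leaf. -/
def IsInterior (T : XTree α X) (v : T.V) : Prop := v ∉ T.ι '' X

/-- Fully-resolved: every interior vertex has degree 3. -/
def IsFullyResolved (T : XTree α X) : Prop :=
  ∀ v : T.V, T.IsInterior v → (T.tree.neighborSet v).ncard = 3

/-- The unique path between two vertices of the tree. -/
noncomputable def treePath (T : XTree α X) (u v : T.V) : T.tree.Walk u v :=
  (T.isTree.existsUnique_path u v).exists.choose

lemma treePath_isPath (T : XTree α X) (u v : T.V) : (T.treePath u v).IsPath :=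
  (T.isTree.existsUnique_path u v).exists.choose_spec

/-- Weighted path distance between two vertices. -/
noncomputable def pathDist (T : XTree α X) (w : Sym2 T.V → ℝ) (u v : T.V) : ℝ :=
  ((T.treePath u v).edges.map w).sum

lemma treePath_symm (T : XTree α X) (u v : T.V) :
    T.treePath u v = (T.treePath v u).reverse :=
  (T.isTree.existsUnique_path u v).unique (T.treePath_isPath u v)
    ((T.treePath_isPath v u).reverse)

lemma pathDist_symm (T : XTree α X) (w : Sym2 T.V → ℝ) (u v : T.V) :
    T.pathDist w u v = T.pathDist w v u := by
  unfold pathDist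
  rw [treePath_symm, SimpleGraph.Walk.edges_reverse, List.map_reverse, List.sum_reverse]

/-- The induced distance on pairs of leaf labels. -/
noncomputable def cordDist (T : XTree α X) (w : Sym2 T.V → ℝ) : Sym2 α → ℝ :=
  Sym2.lift ⟨fun a b => T.pathDist w (T.ι a) (T.ι b),
    fun a b => T.pathDist_symm w (T.ι a) (T.ι b)⟩

/-- An edge-weighting assigns a nonnegative weight to every edge. -/
def IsEdgeWeighting (T : XTree α X) (w : Sym2 T.V → ℝ) : Prop :=
  ∀ e ∈ T.tree.edgeSet, 0 ≤ w e

/-- A proper edge-weighting gives positive weight to every interior edge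
(i.e. every edge not incident with a leaf). -/
def IsProperWeighting (T : XTree α X) (w : Sym2 T.V → ℝ) : Prop :=
  T.IsEdgeWeighting w ∧ ∀ e ∈ T.tree.edgeSet, (∀ v ∈ e, T.IsInterior v) → 0 < w e

/-- The set of cords (2-element subsets) of `X`. -/
def cords (X : Set α) : Set (Sym2 α) := {c | ¬ c.IsDiag ∧ ∀ a ∈ c, a ∈ X}

/-- Two weighted trees are `L`-isometric if their leaf distances agree on `L`. -/
def LIsometric (T : XTree α X) (w : Sym2 T.V → ℝ) (T' : XTree α X) (w' : Sym2 T'.V → ℝ)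
    (L : Set (Sym2 α)) : Prop :=
  ∀ c ∈ L, T.cordDist w c = T'.cordDist w' c

/-- `L` is an edge-weight lasso for `T`. -/
def IsEdgeWeightLasso (T : XTree α X) (L : Set (Sym2 α)) : Prop :=
  ∀ w w' : Sym2 T.V → ℝ, T.IsProperWeighting w → T.IsProperWeighting w' →
    LIsometric T w T w' L → ∀ e ∈ T.tree.edgeSet, w e = w' e

/-- Two `X`-trees are equivalent if there is a graph isomorphism fixing `X`. -/
def Equivalent (T T' : XTree α X) : Prop :=
  ∃ φ : T.tree ≃g T'.tree, ∀ a ∈ X, φ (T.ι a) = T'.ι a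

/-- `L` is a topological lasso for `T`. -/
def IsTopologicalLasso (T : XTree α X) (L : Set (Sym2 α)) : Prop :=
  ∀ (T' : XTree α X) (w : Sym2 T.V → ℝ) (w' : Sym2 T'.V → ℝ),
    T.IsProperWeighting w → T'.IsProperWeighting w' →
    LIsometric T w T' w' L → Equivalent T T'

/-- `L` is a strong lasso for `T`. -/
def IsStrongLasso (T : XTree α X) (L : Set (Sym2 α)) : Prop :=
  IsEdgeWeightLasso T L ∧ IsTopologicalLasso T L

/-- The set of leaf labels on the side of edge `e` containing endpoint `u`. -/
def sideSet (T : XTree α X) (e : Sym2 T.V) (u : T.V) : Set α :=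
  {a | a ∈ X ∧ (T.tree.deleteEdges {e}).Reachable (T.ι a) u}

/-- The clusters of `T`: leaf sets of the two components of `T - e`, over all edges `e`. -/
def clus (T : XTree α X) : Set (Set α) :=
  {A | ∃ e ∈ T.tree.edgeSet, ∃ u ∈ e, A = T.sideSet e u}

/-- A stable transversal for a collection of subsets of `α`. -/
def IsStableTransversal (C : Set (Set α)) (f : Set α → α) : Prop :=
  (∀ A ∈ C, f A ∈ A) ∧ ∀ A ∈ C, ∀ B ∈ C, f A ∈ B → B ⊆ A → f A = f B

/-- Leaf labels of the component of `T - v` containing the vertex `u`. -/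
def compSet (T : XTree α X) (v u : T.V) : Set α :=
  {a | a ∈ X ∧ ∃ p : T.tree.Walk (T.ι a) u, v ∉ p.support}

/-- The triplet cover `L_{(T,f)}` generated by a transversal `f`. -/
def tripletCoverOf (T : XTree α X) (f : Set α → α) : Set (Sym2 α) :=
  {c | ∃ v u₁ u₂ : T.V, T.IsInterior v ∧ T.tree.Adj v u₁ ∧ T.tree.Adj v u₂ ∧ u₁ ≠ u₂ ∧
    c = s(f (T.compSet v u₁), f (T.compSet v u₂))}

/-- `L` is a stable triplet cover of `T`. -/
def IsStableTripletCover (T : XTree α X) (L : Set (Sym2 α)) : Prop :=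
  ∃ f : Set α → α, IsStableTransversal (clus T) f ∧ L = tripletCoverOf T f

/-- `T|{a,b,c,d}` is the quartet tree `ab||cd`: the four leaves are distinct members
of `X` and the path from `a` to `b` is vertex-disjoint from the path from `c` to `d`. -/
def Quartet (T : XTree α X) (a b c d : α) : Prop :=
  a ∈ X ∧ b ∈ X ∧ c ∈ X ∧ d ∈ X ∧ List.Pairwise (· ≠ ·) [a, b, c, d] ∧
  ∀ (p : T.tree.Walk (T.ι a) (T.ι b)) (q : T.tree.Walk (T.ι c) (T.ι d)),
    p.IsPath → q.IsPath → ∀ v, v ∈ p.support → v ∉ q.support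

/-- The cord `c` admits pivots relative to already-available cords `L ∪ earlier`. -/
def HasPivots (T : XTree α X) (L : Set (Sym2 α)) (earlier : List (Sym2 α))
    (c : Sym2 α) : Prop :=
  ∃ a b p q : α, c = s(a, b) ∧ Quartet T a p q b ∧
    ∀ c' ∈ [s(a, p), s(a, q), s(b, p), s(b, q), s(p, q)], c' ∈ L ∨ c' ∈ earlier

/-- `ord` is a shellable ordering of `cords X - L` with respect to `T`. -/
def IsShellableOrdering (T : XTree α X) (L : Set (Sym2 α)) (ord : List (Sym2 α)) : Prop :=
  ord.Nodup ∧ (∀ c, c ∈ ord ↔ c ∈ cords X \ L) ∧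
  ∀ i (h : i < ord.length), HasPivots T L (ord.take i) (ord.get ⟨i, h⟩)

/-- `L` is a shellable lasso for `T`: `L ⊆ cords X`, every element of `X` occurs in some
cord of `L`, and `cords X - L` admits a shellable ordering. -/
def IsShellableLasso (T : XTree α X) (L : Set (Sym2 α)) : Prop :=
  L ⊆ cords X ∧ (∀ a ∈ X, ∃ c ∈ L, a ∈ c) ∧ ∃ ord, IsShellableOrdering T L ord

/-- The graph `(Xs, L)` is a 2d-tree. -/
def Is2dTree (Xs : Set α) (L : Set (Sym2 α)) : Prop :=
  ∃ ord : List α, ord.Nodup ∧ (∀ a, a ∈ ord ↔ a ∈ Xs) ∧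
    ∃ h2 : 2 ≤ ord.length,
      s(ord.get ⟨0, by omega⟩, ord.get ⟨1, by omega⟩) ∈ L ∧
      ∀ i (h : i < ord.length), 2 ≤ i →
        {b | b ∈ ord.take i ∧ s(ord.get ⟨i, h⟩, b) ∈ L}.ncard = 2

/-- Leaves `x` and `y` form a cherry of `T`. -/
def IsCherry (T : XTree α X) (x y : α) : Prop :=
  x ≠ y ∧ x ∈ X ∧ y ∈ X ∧ ∃ v : T.V, T.tree.Adj (T.ι x) v ∧ T.tree.Adj (T.ι y) v

/-- `T'` is (equivalent to) the restriction `T|Y` of `T` to `Y ⊆ X`, characterized by the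
fact that the clusters of `T|Y` are exactly the nonempty proper restrictions to `Y`
of clusters of `T`. -/
def IsRestrictionOf {Y : Set α} (T' : XTree α Y) (T : XTree α X) : Prop :=
  Y ⊆ X ∧ clus T' = {A | (∃ B ∈ clus T, A = B ∩ Y) ∧ A.Nonempty ∧ A ≠ Y}

open Classical in
/-- One application of the extension rule (R), acting on a state consisting of
the current set of cords together with the current distance values. -/
def RStep (Xs : Set α) (S S' : Set (Sym2 α) × (Sym2 α → ℝ)) : Prop :=
  ∃ x y u z : α, x ∈ Xs ∧ y ∈ Xs ∧ u ∈ Xs ∧ z ∈ Xs ∧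
    List.Pairwise (· ≠ ·) [x, y, u, z] ∧
    s(x, y) ∈ S.1 ∧ s(y, u) ∈ S.1 ∧ s(y, z) ∈ S.1 ∧ s(x, u) ∈ S.1 ∧ s(u, z) ∈ S.1 ∧
    s(x, z) ∉ S.1 ∧
    S.2 s(x, y) + S.2 s(u, z) < S.2 s(x, u) + S.2 s(y, z) ∧
    S'.1 = insert s(x, z) S.1 ∧
    S'.2 = Function.update S.2 s(x, z) (S.2 s(x, u) + S.2 s(y, z) - S.2 s(y, u))

/-- `S` is the result `cl_R(L)` (with its `d`-values) of exhaustively applying rule (R)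
starting from `L` with initial distance values `d`. -/
def IsRClosureOf (Xs : Set α) (L : Set (Sym2 α)) (d : Sym2 α → ℝ)
    (S : Set (Sym2 α) × (Sym2 α → ℝ)) : Prop :=
  Relation.ReflTransGen (RStep Xs) (L, d) S ∧ ∀ S', ¬ RStep Xs S S'

end XTree

/-! Grow a subtree `S` of interior vertices one vertex at a time, keeping track of the labels
`f (A_v^i)` seen at the vertices of `S`. When `v` is attached to `S` along the edge `vw`, stability
makes two of its three labels old ones (the labels `f` assigns to the two sides of `vw`), while the
third is new. Compatibility of the clusters of a tree together with stability shows that these two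
are the only old labels joined to the new one by a cord of `L_{(T,f)}`. Adding the new labels in
this order therefore builds a 2d-tree, and once `S` contains every interior vertex each leaf `x`
has appeared, as the label of its singleton cluster. -/

namespace XTree

variable {α : Type} {X : Set α} {T : XTree α X}

lemma Is2dTree.pair {L : Set (Sym2 α)} {a b : α} (hab : a ≠ b) (h : s(a, b) ∈ L) :
    Is2dTree {a, b} L :=
  ⟨[a, b], by simp [hab], by simp, le_rfl, h, fun i hi hi2 => by simp at hi; omega⟩

lemma Is2dTree.insert {Xs : Set α} {L : Set (Sym2 α)} {x : α} (h : Is2dTree Xs L)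
    (hx : x ∉ Xs) (hdeg : {b | b ∈ Xs ∧ s(x, b) ∈ L}.ncard = 2) :
    Is2dTree (insert x Xs) L := by
  obtain ⟨ord, hnd, hmem, h2, h01, hdeg'⟩ := h
  refine ⟨ord ++ [x], ?_, fun a => by simp [hmem, or_comm], by simp; omega, ?_, ?_⟩
  · rw [← List.concat_eq_append]
    exact hnd.concat (by rwa [hmem])
  · simpa [List.getElem_append_left (show 0 < ord.length by omega),
      List.getElem_append_left (show 1 < ord.length by omega)] using h01
  · intro i hi hi2
    rcases Nat.lt_succ_iff_lt_or_eq.1 (by simpa using hi) with hi' | rfl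
    · simpa [List.take_append_of_le_length hi'.le, List.getElem_append_left hi']
        using hdeg' i hi' hi2
    · simpa [hmem] using hdeg

lemma Is2dTree.triangle {L : Set (Sym2 α)} {a b c : α} (hab : a ≠ b) (hac : a ≠ c)
    (hbc : b ≠ c) (hL_ab : s(a, b) ∈ L) (hL_ca : s(c, a) ∈ L) (hL_cb : s(c, b) ∈ L) :
    Is2dTree {a, b, c} L := by
  have hdeg : {d | d ∈ ({a, b} : Set α) ∧ s(c, d) ∈ L} = {a, b} := by
    ext d
    simp only [Set.mem_ofPred_eq, Set.mem_insert_iff, Set.mem_singleton_iff]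
    constructor
    · exact And.left
    · rintro (rfl | rfl) <;> simp [*]
  have hset : ({a, b, c} : Set α) = {c, a, b} := by
    ext; simp only [Set.mem_insert_iff, Set.mem_singleton_iff]; tauto
  rw [hset]
  exact (Is2dTree.pair hab hL_ab).insert (by simp [hac.symm, hbc.symm])
    (by rw [hdeg, Set.ncard_pair hab])

noncomputable instance (T : XTree α X) : Fintype T.V := T.fintypeV

lemma eq_treePath {u v : T.V} {p : T.tree.Walk u v} (hp : p.IsPath) : p = T.treePath u v :=
  (T.isTree.existsUnique_path u v).unique hp (T.treePath_isPath u v)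

lemma treePath_of_adj_of_adj {v u₁ u₂ : T.V} (h₁ : T.tree.Adj v u₁) (h₂ : T.tree.Adj v u₂)
    (hne : u₁ ≠ u₂) : T.treePath u₁ u₂ = .cons h₁.symm (.cons h₂ .nil) :=
  (eq_treePath (by simp [h₁.ne', h₂.ne, hne])).symm

def ReachAvoiding (T : XTree α X) (v w u : T.V) : Prop :=
  ∃ p : T.tree.Walk w u, v ∉ p.support

lemma reachAvoiding_iff {v w u : T.V} :
    T.ReachAvoiding v w u ↔ v ∉ (T.treePath w u).support := by
  classical
  refine ⟨fun ⟨p, hp⟩ hv => hp (p.support_bypass_subset_support ?_), fun h => ⟨_, h⟩⟩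
  rwa [eq_treePath p.bypass_isPath]

namespace ReachAvoiding

variable {v w u z : T.V}

lemma ne_left (h : T.ReachAvoiding v w u) : w ≠ v := by
  rintro rfl; exact h.choose_spec h.choose.start_mem_support

lemma refl (h : w ≠ v) : T.ReachAvoiding v w w := ⟨.nil, by simp [h.symm]⟩

lemma symm (h : T.ReachAvoiding v w u) : T.ReachAvoiding v u w :=
  let ⟨p, hp⟩ := h; ⟨p.reverse, by simpa using hp⟩

lemma trans (h : T.ReachAvoiding v w u) (h' : T.ReachAvoiding v u z) : T.ReachAvoiding v w z :=
  let ⟨p, hp⟩ := h; let ⟨q, hq⟩ := h'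
  ⟨p.append q, by rw [SimpleGraph.Walk.mem_support_append_iff]; tauto⟩

lemma of_adj (h : T.tree.Adj w u) (hw : w ≠ v) (hu : u ≠ v) : T.ReachAvoiding v w u :=
  ⟨.cons h .nil, by simp [hw.symm, hu.symm]⟩

lemma of_not_reachAvoiding {t : T.V} (h : T.ReachAvoiding v w u) (ht : ¬ T.ReachAvoiding v t u) :
    T.ReachAvoiding t w u := by
  classical
  obtain ⟨p, hp⟩ := h
  exact ⟨p, fun htp =>
    ht ⟨p.dropUntil t htp, fun hv => hp (p.support_dropUntil_subset_support htp hv)⟩⟩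

end ReachAvoiding

lemma not_reachAvoiding_of_adj {v u₁ u₂ : T.V} (h₁ : T.tree.Adj v u₁) (h₂ : T.tree.Adj v u₂)
    (hne : u₁ ≠ u₂) : ¬ T.ReachAvoiding v u₁ u₂ := by
  simp [reachAvoiding_iff, treePath_of_adj_of_adj h₁ h₂ hne]

lemma exists_adj_reachAvoiding {v w : T.V} (h : w ≠ v) :
    ∃ u, T.tree.Adj v u ∧ T.ReachAvoiding v w u := by
  have hp := T.treePath_isPath v w
  generalize T.treePath v w = p at hp
  cases p with
  | nil => exact absurd rfl h
  | cons ha q =>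
    rw [SimpleGraph.Walk.cons_isPath_iff] at hp
    exact ⟨_, ha, q.reverse, by simpa using hp.2⟩

lemma reachAvoiding_adj_unique {v w u₁ u₂ : T.V} (h₁ : T.tree.Adj v u₁) (h₂ : T.tree.Adj v u₂)
    (r₁ : T.ReachAvoiding v w u₁) (r₂ : T.ReachAvoiding v w u₂) : u₁ = u₂ := by
  by_contra hne
  exact not_reachAvoiding_of_adj h₁ h₂ hne (r₁.symm.trans r₂)

lemma not_reachAvoiding_swap {v w z : T.V} (h : T.tree.Adj v w) (h₁ : T.ReachAvoiding w z v) :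
    ¬ T.ReachAvoiding v z w := by
  rw [reachAvoiding_iff] at h₁ ⊢
  intro h₂
  have hpath : (SimpleGraph.Walk.cons h.symm (T.treePath z v).reverse).IsPath := by
    rw [SimpleGraph.Walk.cons_isPath_iff]
    exact ⟨(T.treePath_isPath z v).reverse, by simpa using h₁⟩
  have hv : v ∈ (T.treePath w z).support := by
    rw [← eq_treePath hpath]; simp
  rw [treePath_symm] at hv
  exact h₂ (by simpa using hv)

lemma mem_compSet {v u : T.V} {a : α} :
    a ∈ T.compSet v u ↔ a ∈ X ∧ T.ReachAvoiding v (T.ι a) u := Iff.rfl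

lemma eq_of_mem_compSet_of_mem_compSet {v u₁ u₂ : T.V} {a : α} (h₁ : T.tree.Adj v u₁)
    (h₂ : T.tree.Adj v u₂) (ha₁ : a ∈ T.compSet v u₁) (ha₂ : a ∈ T.compSet v u₂) : u₁ = u₂ :=
  reachAvoiding_adj_unique h₁ h₂ ha₁.2 ha₂.2

lemma not_mem_compSet_swap {v w : T.V} {a : α} (h : T.tree.Adj v w) (ha : a ∈ T.compSet v w) :
    a ∉ T.compSet w v :=
  fun ha' => not_reachAvoiding_swap h ha'.2 ha.2

lemma exists_mem_compSet {v : T.V} (hv : T.IsInterior v) {a : α} (ha : a ∈ X) :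
    ∃ u, T.tree.Adj v u ∧ a ∈ T.compSet v u := by
  have hav : T.ι a ≠ v := by rintro rfl; exact hv ⟨a, ha, rfl⟩
  obtain ⟨u, hu, hr⟩ := exists_adj_reachAvoiding hav
  exact ⟨u, hu, ha, hr⟩

lemma compSet_subset_compSet {v u v' u' : T.V} (h : ¬ T.ReachAvoiding v' v u')
    (h' : T.ReachAvoiding v u' u) : T.compSet v' u' ⊆ T.compSet v u :=
  fun _ ⟨ha, hr⟩ => ⟨ha, (ReachAvoiding.of_not_reachAvoiding hr h).trans h'⟩

lemma compSet_subset_compSet_of_adj {v w u : T.V} (hw : T.tree.Adj v w) (hu : T.tree.Adj v u)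
    (huw : u ≠ w) : T.compSet v u ⊆ T.compSet w v :=
  compSet_subset_compSet (not_reachAvoiding_of_adj hw hu huw.symm)
    (.of_adj hu.symm huw hw.ne)

lemma mem_compSet_swap_iff {v w : T.V} (hv : T.IsInterior v) (hw : T.tree.Adj v w) {a : α} :
    a ∈ T.compSet w v ↔ ∃ u, T.tree.Adj v u ∧ u ≠ w ∧ a ∈ T.compSet v u := by
  refine ⟨fun ha => ?_, fun ⟨u, hu, huw, ha⟩ => compSet_subset_compSet_of_adj hw hu huw ha⟩
  obtain ⟨u, hu, hau⟩ := exists_mem_compSet hv ha.1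
  exact ⟨u, hu, by rintro rfl; exact not_mem_compSet_swap hw hau ha, hau⟩

/-- Compatibility of the clusters of a tree, seen from a vertex `t` on the `n`-side of `v`. -/
lemma compSet_subset_or_subset {v n t m : T.V} (hn : T.tree.Adj v n) (ht : T.ReachAvoiding v t n)
    (hm : T.tree.Adj t m) :
    (∀ u, T.tree.Adj v u → u ≠ n → T.compSet v u ⊆ T.compSet t m) ∨
      T.compSet t m ⊆ T.compSet v n := by
  by_cases hvm : T.ReachAvoiding t v m
  · left
    intro u hu hun
    have htu : ¬ T.ReachAvoiding v t u := fun h => hun (reachAvoiding_adj_unique hu hn h ht)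
    have hut : u ≠ t := by rintro rfl; exact htu (.refl hu.ne')
    exact compSet_subset_compSet htu ((ReachAvoiding.of_adj hu.symm hut ht.ne_left.symm).trans hvm)
  · right
    have hmv : m ≠ v := by rintro rfl; exact hvm (.refl ht.ne_left.symm)
    exact compSet_subset_compSet hvm ((ReachAvoiding.of_adj hm.symm hmv ht.ne_left).trans ht)

lemma compSet_eq_sideSet {v u : T.V} (h : T.tree.Adj v u) :
    T.compSet v u = T.sideSet s(v, u) u := by
  classical
  ext a
  simp only [sideSet, Set.mem_ofPred_eq, mem_compSet, and_congr_right_iff,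
    SimpleGraph.reachable_deleteEdges_iff_exists_walk]
  intro _
  constructor
  · rintro ⟨p, hp⟩
    exact ⟨p, fun he => hp (p.fst_mem_support_of_mem_edges he)⟩
  · rintro ⟨p, hp⟩
    refine ⟨p.bypass, fun hv => hp (p.edges_bypass_subset_edges ?_)⟩
    refine p.bypass.edges_dropUntil_subset_edges hv ?_
    rw [eq_treePath (p.bypass_isPath.dropUntil hv),
      ← eq_treePath (p := .cons h .nil) (by simp [h.ne])]
    simp

lemma compSet_mem_clus {v u : T.V} (h : T.tree.Adj v u) : T.compSet v u ∈ clus T :=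
  ⟨s(v, u), h, u, Sym2.mem_mk_right v u, compSet_eq_sideSet h⟩

lemma compSet_eq_singleton {x : α} (hx : x ∈ X) {v : T.V}
    (hv : T.tree.neighborSet (T.ι x) = {v}) : T.compSet v (T.ι x) = {x} := by
  have hxv : T.tree.Adj (T.ι x) v := by rw [← SimpleGraph.mem_neighborSet, hv]; rfl
  refine Set.eq_singleton_iff_unique_mem.2 ⟨⟨hx, ReachAvoiding.refl hxv.ne⟩, fun a ha => ?_⟩
  by_contra hax
  obtain ⟨u, hu, hr⟩ := exists_adj_reachAvoiding (fun h => hax (T.ι_injOn ha.1 hx h))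
  have huv : u ∈ T.tree.neighborSet (T.ι x) := hu
  rw [hv, Set.mem_singleton_iff] at huv
  rw [huv] at hr
  exact not_reachAvoiding_swap hxv.symm hr ha.2

lemma isInterior_of_adj_of_adj {v a b : T.V} (ha : T.tree.Adj v a) (hb : T.tree.Adj v b)
    (hab : a ≠ b) : T.IsInterior v := by
  intro hv
  have h := Set.ncard_le_ncard (show ({a, b} : Set T.V) ⊆ T.tree.neighborSet v by
    rintro x (rfl | rfl) <;> assumption) (Set.toFinite _)
  rw [Set.ncard_pair hab, (T.leaf_iff v).2 hv] at h
  omega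

lemma exists_neighborSet_eq {v w u : T.V} (hT : T.IsFullyResolved) (hv : T.IsInterior v)
    (hw : T.tree.Adj v w) (hu : T.tree.Adj v u) (huw : u ≠ w) :
    ∃ u', u' ≠ w ∧ u' ≠ u ∧ T.tree.neighborSet v = {w, u, u'} := by
  have hsub : ({w, u} : Set T.V) ⊆ T.tree.neighborSet v := by
    rintro x (rfl | rfl) <;> assumption
  obtain ⟨u', hu'⟩ := Set.ncard_eq_one.1 (show (T.tree.neighborSet v \ {w, u}).ncard = 1 by
    rw [Set.ncard_sdiff hsub, hT v hv, Set.ncard_pair huw.symm])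
  have hu'mem : u' ∈ T.tree.neighborSet v \ {w, u} := hu' ▸ rfl
  refine ⟨u', fun h => hu'mem.2 (.inl h), fun h => hu'mem.2 (.inr h), ?_⟩
  rw [← Set.union_sdiff_cancel hsub, hu', Set.insert_union, Set.singleton_union]

lemma exists_neighborSet_eq_singleton {x : α} (hx : x ∈ X) :
    ∃ v, T.tree.neighborSet (T.ι x) = {v} :=
  Set.ncard_eq_one.1 ((T.leaf_iff _).2 ⟨x, hx, rfl⟩)

lemma isInterior_of_neighborSet_eq_singleton (hcard : 3 ≤ X.ncard) {x : α} {v : T.V}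
    (hv : T.tree.neighborSet (T.ι x) = {v}) : T.IsInterior v := by
  -- Two adjacent leaves span a component of the tree, so they would be all of it.
  intro hleaf
  have hxv : T.tree.Adj (T.ι x) v := by rw [← SimpleGraph.mem_neighborSet, hv]; rfl
  obtain ⟨z, hz⟩ := Set.ncard_eq_one.1 ((T.leaf_iff v).2 hleaf)
  have hvx : T.tree.neighborSet v = {T.ι x} := by
    have hxz : T.ι x ∈ T.tree.neighborSet v := hxv.symm
    rw [hz, Set.mem_singleton_iff] at hxz
    rw [hz, hxz]
  have hclosed : ∀ {y z : T.V}, y ∈ ({T.ι x, v} : Set T.V) → T.tree.Adj y z →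
      z ∈ ({T.ι x, v} : Set T.V) := by
    rintro y z (rfl | rfl) hyz
    · exact .inr (hv ▸ hyz : z ∈ ({v} : Set T.V))
    · exact .inl (hvx ▸ hyz : z ∈ ({T.ι x} : Set T.V))
  have hwalk : ∀ {y u : T.V} (p : T.tree.Walk y u), y ∈ ({T.ι x, v} : Set T.V) →
      u ∈ ({T.ι x, v} : Set T.V) := by
    intro y u p
    induction p with
    | nil => exact id
    | cons h _ ih => exact fun hy => ih (hclosed hy h)
  have hall : ∀ u, u ∈ ({T.ι x, v} : Set T.V) := fun u =>
    hwalk (T.isTree.connected.preconnected (T.ι x) u).some (.inl rfl)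
  have himg : T.ι '' X ⊆ {T.ι x, v} := fun y _ => hall y
  have := (T.ι_injOn.ncard_image).symm.trans_le
    ((Set.ncard_le_ncard himg (Set.toFinite _)).trans (Set.ncard_insert_le _ _))
  rw [Set.ncard_singleton] at this
  omega

lemma exists_adj_isInterior_not_mem {S : Set T.V} {w₀ z : T.V} (hw₀ : w₀ ∈ S)
    (hz : T.IsInterior z) (hzS : z ∉ S) :
    ∃ v w, T.IsInterior v ∧ v ∉ S ∧ w ∈ S ∧ T.tree.Adj v w := by
  suffices ∀ (a : T.V) (p : T.tree.Walk a z), p.IsPath → a ∈ S →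
      ∃ v w, T.IsInterior v ∧ v ∉ S ∧ w ∈ S ∧ T.tree.Adj v w from
    this w₀ _ (T.treePath_isPath w₀ z) hw₀
  intro a p
  induction p with
  | nil => exact fun _ ha => absurd ha hzS
  | @cons a y _ h q ih =>
    intro hp ha
    by_cases hy : y ∈ S
    · exact ih ‹_› ‹_› hp.of_cons hy
    cases q with
    | nil => exact ⟨y, a, hz, hy, ha, h.symm⟩
    | cons h' q' =>
      refine ⟨y, a, isInterior_of_adj_of_adj h.symm h' ?_, hy, ha, h.symm⟩
      rintro rfl
      simp at hp

section Labels

variable {f : Set α → α}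

def labels (T : XTree α X) (f : Set α → α) (S : Set T.V) : Set α :=
  ⋃ v ∈ S, (fun u => f (T.compSet v u)) '' T.tree.neighborSet v

lemma mem_labels {S : Set T.V} {x : α} :
    x ∈ labels T f S ↔ ∃ v ∈ S, ∃ u, T.tree.Adj v u ∧ f (T.compSet v u) = x := by
  simp [labels]

lemma labels_insert {S : Set T.V} {v : T.V} :
    labels T f (insert v S) =
      (fun u => f (T.compSet v u)) '' T.tree.neighborSet v ∪ labels T f S :=
  Set.biUnion_insert _ _ _

lemma mem_tripletCoverOf {v u₁ u₂ : T.V} (hv : T.IsInterior v) (h₁ : T.tree.Adj v u₁)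
    (h₂ : T.tree.Adj v u₂) (hne : u₁ ≠ u₂) :
    s(f (T.compSet v u₁), f (T.compSet v u₂)) ∈ tripletCoverOf T f :=
  ⟨v, u₁, u₂, hv, h₁, h₂, hne, rfl⟩

variable (hf : IsStableTransversal (clus T) f)
include hf

lemma f_compSet_mem {v u : T.V} (h : T.tree.Adj v u) : f (T.compSet v u) ∈ T.compSet v u :=
  hf.1 _ (compSet_mem_clus h)

lemma f_compSet_eq_of_subset {v u v' u' : T.V} (h : T.tree.Adj v u) (h' : T.tree.Adj v' u')
    (hmem : f (T.compSet v u) ∈ T.compSet v' u') (hsub : T.compSet v' u' ⊆ T.compSet v u) :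
    f (T.compSet v u) = f (T.compSet v' u') :=
  hf.2 _ (compSet_mem_clus h) _ (compSet_mem_clus h') hmem hsub

lemma f_compSet_ne {v u₁ u₂ : T.V} (h₁ : T.tree.Adj v u₁) (h₂ : T.tree.Adj v u₂)
    (hne : u₁ ≠ u₂) : f (T.compSet v u₁) ≠ f (T.compSet v u₂) := fun h =>
  hne (eq_of_mem_compSet_of_mem_compSet h₁ h₂ (f_compSet_mem hf h₁) (h ▸ f_compSet_mem hf h₂))

lemma f_compSet_swap_eq {v w u : T.V} (hw : T.tree.Adj v w) (hu : T.tree.Adj v u) (huw : u ≠ w)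
    (hmem : f (T.compSet w v) ∈ T.compSet v u) : f (T.compSet w v) = f (T.compSet v u) :=
  f_compSet_eq_of_subset hf hw.symm hu hmem (compSet_subset_compSet_of_adj hw hu huw)

lemma exists_f_compSet_eq {v w : T.V} (hw : T.IsInterior w) (h : T.tree.Adj v w) :
    ∃ c, T.tree.Adj w c ∧ f (T.compSet w c) = f (T.compSet v w) := by
  obtain ⟨c, hc, hmem⟩ := exists_mem_compSet hw (f_compSet_mem hf h).1
  have hcv : c ≠ v := by rintro rfl; exact not_mem_compSet_swap h (f_compSet_mem hf h) hmem
  exact ⟨c, hc, (f_compSet_swap_eq hf h.symm hc hcv hmem).symm⟩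

lemma f_compSet_eq_of_reachAvoiding {v w t c : T.V} (hv : T.IsInterior v)
    (hw : T.tree.Adj v w) (ht : T.ReachAvoiding v t w) (hc : T.tree.Adj t c)
    (hmem : f (T.compSet t c) ∈ T.compSet w v) : f (T.compSet t c) = f (T.compSet w v) := by
  obtain ⟨u, hu, huw, hfu⟩ := (mem_compSet_swap_iff hv hw).1 hmem
  rcases compSet_subset_or_subset hw ht hc with hsub | hsub
  · refine f_compSet_eq_of_subset hf hc hw.symm hmem fun a ha => ?_
    obtain ⟨u', hu', hu'w, ha'⟩ := (mem_compSet_swap_iff hv hw).1 ha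
    exact hsub u' hu' hu'w ha'
  · exact absurd (eq_of_mem_compSet_of_mem_compSet hu hw hfu (hsub (f_compSet_mem hf hc))) huw

lemma labels_subset {S : Set T.V} : labels T f S ⊆ X := by
  intro x hx
  obtain ⟨v, -, u, hu, rfl⟩ := mem_labels.1 hx
  exact (f_compSet_mem hf hu).1

lemma labels_eq_of_forall_mem (hcard : 3 ≤ X.ncard) {S : Set T.V}
    (hS : ∀ p, T.IsInterior p → p ∈ S) : labels T f S = X := by
  refine (labels_subset hf).antisymm fun x hx => ?_
  obtain ⟨v, hv⟩ := exists_neighborSet_eq_singleton (T := T) hx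
  have hxv : T.tree.Adj (T.ι x) v := by rw [← SimpleGraph.mem_neighborSet, hv]; rfl
  refine mem_labels.2 ⟨v, hS v (isInterior_of_neighborSet_eq_singleton hcard hv), T.ι x,
    hxv.symm, ?_⟩
  simpa [compSet_eq_singleton hx hv] using f_compSet_mem hf hxv.symm

end Labels

/-- `v` is entered from `w`; the label of the edge `wv` continues towards `u₁`, so the label
`f (T.compSet v u₂)` is the new one. -/
structure Fork (T : XTree α X) (f : Set α → α) (w v u₁ u₂ : T.V) : Prop where
  adj_w : T.tree.Adj v w
  adj₁ : T.tree.Adj v u₁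
  adj₂ : T.tree.Adj v u₂
  ne_w₁ : u₁ ≠ w
  ne_w₂ : u₂ ≠ w
  ne₁₂ : u₁ ≠ u₂
  mem₁ : f (T.compSet w v) ∈ T.compSet v u₁

namespace Fork

variable {f : Set α → α} {w v u₁ u₂ : T.V}

lemma isInterior (hF : Fork T f w v u₁ u₂) : T.IsInterior v :=
  isInterior_of_adj_of_adj hF.adj₁ hF.adj₂ hF.ne₁₂

lemma not_mem₂ (hF : Fork T f w v u₁ u₂) : f (T.compSet w v) ∉ T.compSet v u₂ := fun h =>
  hF.ne₁₂ (eq_of_mem_compSet_of_mem_compSet hF.adj₁ hF.adj₂ hF.mem₁ h)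

variable (hf : IsStableTransversal (clus T) f)
include hf

lemma f_compSet_ne_of_reachAvoiding (hF : Fork T f w v u₁ u₂) {t c : T.V}
    (ht : T.ReachAvoiding v t w) (hc : T.tree.Adj t c) :
    f (T.compSet t c) ≠ f (T.compSet v u₂) := by
  intro heq
  have hmem := f_compSet_mem hf hF.adj₂
  rw [← heq] at hmem
  apply hF.not_mem₂
  rwa [← f_compSet_eq_of_reachAvoiding hf hF.isInterior hF.adj_w ht hc
    (compSet_subset_compSet_of_adj hF.adj_w hF.adj₂ hF.ne_w₂ hmem)]

lemma eq_or_eq_of_mem_labels (hF : Fork T f w v u₁ u₂) {S : Set T.V}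
    (hS : ∀ p ∈ S, T.ReachAvoiding v p w) {t m m' : T.V} (hm : T.tree.Adj t m)
    (hm' : T.tree.Adj t m') (hx : f (T.compSet t m) = f (T.compSet v u₂))
    (hb : f (T.compSet t m') ∈ labels T f S) :
    f (T.compSet t m') = f (T.compSet w v) ∨ f (T.compSet t m') = f (T.compSet v w) := by
  obtain ⟨u, hu, hbu⟩ := exists_mem_compSet hF.isInterior (f_compSet_mem hf hm').1
  by_cases huw : u ≠ w
  · left
    obtain ⟨p, hp, c, hc, hpc⟩ := mem_labels.1 hb
    rw [← hpc] at ⊢ hbu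
    exact f_compSet_eq_of_reachAvoiding hf hF.isInterior hF.adj_w (hS p hp) hc
      ((mem_compSet_swap_iff hF.isInterior hF.adj_w).2 ⟨u, hu, huw, hbu⟩)
  right
  rw [not_ne_iff] at huw
  subst huw
  by_cases htv : t = v
  · subst htv
    rw [eq_of_mem_compSet_of_mem_compSet hm' hu (f_compSet_mem hf hm') hbu]
  obtain ⟨n, hn, htn⟩ := exists_adj_reachAvoiding htv
  have hnu : n ≠ u := by
    rintro rfl
    exact hF.f_compSet_ne_of_reachAvoiding hf htn hm hx
  rcases compSet_subset_or_subset hn htn hm' with hsub | hsub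
  · exact f_compSet_eq_of_subset hf hm' hu hbu (hsub u hu hnu.symm)
  · exact absurd (eq_of_mem_compSet_of_mem_compSet hn hu (hsub (f_compSet_mem hf hm')) hbu) hnu

lemma partners_eq (hF : Fork T f w v u₁ u₂) {S : Set T.V} (hwS : w ∈ S)
    (hw : T.IsInterior w) (hS : ∀ p ∈ S, T.ReachAvoiding v p w) :
    {b | b ∈ labels T f S ∧ s(f (T.compSet v u₂), b) ∈ tripletCoverOf T f} =
      {f (T.compSet w v), f (T.compSet v w)} := by
  ext b
  constructor
  · rintro ⟨hb, t, m, m', -, hm, hm', -, hcord⟩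
    rcases Sym2.eq_iff.1 hcord with ⟨hx, rfl⟩ | ⟨hx, rfl⟩
    · exact hF.eq_or_eq_of_mem_labels hf hS hm hm' hx.symm hb
    · exact hF.eq_or_eq_of_mem_labels hf hS hm' hm hx.symm hb
  · rintro (rfl | rfl)
    · refine ⟨mem_labels.2 ⟨w, hwS, v, hF.adj_w.symm, rfl⟩, ?_⟩
      rw [f_compSet_swap_eq hf hF.adj_w hF.adj₁ hF.ne_w₁ hF.mem₁]
      exact mem_tripletCoverOf hF.isInterior hF.adj₂ hF.adj₁ hF.ne₁₂.symm
    · obtain ⟨c, hc, hwc⟩ := exists_f_compSet_eq hf hw hF.adj_w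
      exact ⟨mem_labels.2 ⟨w, hwS, c, hc, hwc⟩,
        mem_tripletCoverOf hF.isInterior hF.adj₂ hF.adj_w hF.ne_w₂⟩

lemma labels_insert_eq (hF : Fork T f w v u₁ u₂) {S : Set T.V} (hwS : w ∈ S)
    (hw : T.IsInterior w) (hnb : T.tree.neighborSet v = {w, u₁, u₂}) :
    labels T f (insert v S) = insert (f (T.compSet v u₂)) (labels T f S) := by
  obtain ⟨c, hc, hwc⟩ := exists_f_compSet_eq hf hw hF.adj_w
  have hw_mem : f (T.compSet v w) ∈ labels T f S := mem_labels.2 ⟨w, hwS, c, hc, hwc⟩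
  have h₁_mem : f (T.compSet v u₁) ∈ labels T f S := mem_labels.2
    ⟨w, hwS, v, hF.adj_w.symm, f_compSet_swap_eq hf hF.adj_w hF.adj₁ hF.ne_w₁ hF.mem₁⟩
  rw [labels_insert, hnb, Set.image_insert_eq, Set.image_insert_eq, Set.image_singleton,
    Set.insert_union, Set.insert_union, Set.singleton_union,
    Set.insert_eq_of_mem (Set.mem_insert_of_mem _ (Set.mem_insert_of_mem _ hw_mem)),
    Set.insert_eq_of_mem (Set.mem_insert_of_mem _ h₁_mem)]

end Fork

lemma exists_fork {f : Set α → α} (hT : T.IsFullyResolved) (hf : IsStableTransversal (clus T) f)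
    {v w : T.V} (hv : T.IsInterior v) (hvw : T.tree.Adj v w) :
    ∃ u₁ u₂, Fork T f w v u₁ u₂ ∧ T.tree.neighborSet v = {w, u₁, u₂} := by
  obtain ⟨u₁, h₁, h₁w, hmem⟩ := (mem_compSet_swap_iff hv hvw).1 (f_compSet_mem hf hvw.symm)
  obtain ⟨u₂, h₂w, h₂₁, hnb⟩ := exists_neighborSet_eq hT hv hvw h₁ h₁w
  have h₂ : T.tree.Adj v u₂ := by rw [← SimpleGraph.mem_neighborSet, hnb]; simp
  exact ⟨u₁, u₂, ⟨hvw, h₁, h₂, h₁w, h₂w, h₂₁.symm, hmem⟩, hnb⟩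

structure Is2dSubtree (T : XTree α X) (f : Set α → α) (r : T.V) (S : Set T.V) : Prop where
  root_mem : r ∈ S
  isInterior : ∀ p ∈ S, T.IsInterior p
  walk_to_root : ∀ p ∈ S, ∃ q : T.tree.Walk p r, ∀ z ∈ q.support, z ∈ S
  is2dTree : Is2dTree (labels T f S) (tripletCoverOf T f)

namespace Is2dSubtree

variable {f : Set α → α} {r : T.V} {S : Set T.V}

lemma reachAvoiding (hS : Is2dSubtree T f r S) {v p w : T.V} (hvS : v ∉ S) (hp : p ∈ S)
    (hw : w ∈ S) : T.ReachAvoiding v p w := by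
  obtain ⟨q, hq⟩ := hS.walk_to_root p hp
  obtain ⟨q', hq'⟩ := hS.walk_to_root w hw
  refine ⟨q.append q'.reverse, fun hv => hvS ?_⟩
  rw [SimpleGraph.Walk.mem_support_append_iff, SimpleGraph.Walk.support_reverse,
    List.mem_reverse] at hv
  exact hv.elim (hq v) (hq' v)

lemma insert (hS : Is2dSubtree T f r S) (hT : T.IsFullyResolved)
    (hf : IsStableTransversal (clus T) f) {v w : T.V} (hv : T.IsInterior v) (hvS : v ∉ S)
    (hwS : w ∈ S) (hvw : T.tree.Adj v w) : Is2dSubtree T f r (insert v S) := by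
  obtain ⟨u₁, u₂, hF, hnb⟩ := exists_fork hT hf hv hvw
  have hw := hS.isInterior w hwS
  have hSw : ∀ p ∈ S, T.ReachAvoiding v p w := fun p hp => hS.reachAvoiding hvS hp hwS
  refine ⟨Set.mem_insert_of_mem _ hS.root_mem, ?_, ?_, ?_⟩
  · rintro p (rfl | hp)
    exacts [hv, hS.isInterior p hp]
  · rintro p (rfl | hp)
    · obtain ⟨q, hq⟩ := hS.walk_to_root w hwS
      refine ⟨.cons hvw q, fun z hz => ?_⟩
      rw [SimpleGraph.Walk.support_cons, List.mem_cons] at hz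
      exact hz.imp id (hq z)
    · obtain ⟨q, hq⟩ := hS.walk_to_root p hp
      exact ⟨q, fun z hz => .inr (hq z hz)⟩
  · rw [hF.labels_insert_eq hf hwS hw hnb]
    refine hS.is2dTree.insert (fun hx => ?_) ?_
    · obtain ⟨p, hp, c, hc, hpc⟩ := mem_labels.1 hx
      exact hF.f_compSet_ne_of_reachAvoiding hf (hSw p hp) hc hpc
    · rw [hF.partners_eq hf hwS hw hSw, Set.ncard_pair fun h => not_mem_compSet_swap hvw
        (f_compSet_mem hf hvw) (by rw [← h]; exact f_compSet_mem hf hvw.symm)]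

end Is2dSubtree

lemma is2dSubtree_singleton {f : Set α → α} (hT : T.IsFullyResolved)
    (hf : IsStableTransversal (clus T) f) {r : T.V} (hr : T.IsInterior r) :
    Is2dSubtree T f r {r} := by
  obtain ⟨a, b, c, hab, hac, hbc, hnb⟩ := Set.ncard_eq_three.1 (hT r hr)
  have hadj : ∀ u ∈ ({a, b, c} : Set T.V), T.tree.Adj r u := fun u hu => by
    rwa [← SimpleGraph.mem_neighborSet, hnb]
  have ha := hadj a (by simp); have hb := hadj b (by simp); have hc := hadj c (by simp)
  refine ⟨rfl, by simpa using hr, by rintro p rfl; exact ⟨.nil, by simp⟩, ?_⟩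
  rw [labels, Set.biUnion_singleton, hnb, Set.image_insert_eq, Set.image_insert_eq,
    Set.image_singleton]
  exact Is2dTree.triangle (f_compSet_ne hf ha hb hab) (f_compSet_ne hf ha hc hac)
    (f_compSet_ne hf hb hc hbc) (mem_tripletCoverOf hr ha hb hab)
    (mem_tripletCoverOf hr hc ha hac.symm) (mem_tripletCoverOf hr hc hb hbc.symm)

lemma exists_is2dSubtree_forall_mem {f : Set α → α} (hT : T.IsFullyResolved)
    (hf : IsStableTransversal (clus T) f) {r : T.V} (hr : T.IsInterior r) :
    ∃ S, Is2dSubtree T f r S ∧ ∀ p, T.IsInterior p → p ∈ S := by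
  obtain ⟨S, hS, hmax⟩ := (Set.toFinite {S | Is2dSubtree T f r S}).exists_maximal
    ⟨{r}, is2dSubtree_singleton hT hf hr⟩
  refine ⟨S, hS, fun z hz => by_contra fun hzS => ?_⟩
  obtain ⟨v, w, hv, hvS, hwS, hvw⟩ := exists_adj_isInterior_not_mem hS.root_mem hz hzS
  exact hvS (hmax (hS.insert hT hf hv hvS hwS hvw) (Set.subset_insert v S) (Set.mem_insert v S))

end XTree

open XTree in
theorem stableTripletCover_is2dTree_general {α : Type} (X : Set α)
    (hcard : 3 ≤ X.ncard) (T : XTree α X) (hT : T.IsFullyResolved)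
    (L : Set (Sym2 α)) (hL : IsStableTripletCover T L) :
    Is2dTree X L := by
  obtain ⟨f, hf, rfl⟩ := hL
  obtain ⟨x, hx⟩ := Set.nonempty_of_ncard_ne_zero (show X.ncard ≠ 0 by omega)
  obtain ⟨r, hr⟩ := exists_neighborSet_eq_singleton (T := T) hx
  obtain ⟨S, hS, hall⟩ :=
    exists_is2dSubtree_forall_mem hT hf (isInterior_of_neighborSet_eq_singleton hcard hr)
  have h := hS.is2dTree
  rwa [labels_eq_of_forall_mem hf hcard hall] at h

open XTree in
/-- If `L` is a stable triplet cover of a fully-resolved `X`-tree `T`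
with `n := |X| ≥ 3`, then the graph `(X, L)` is a 2d-tree. -/
theorem stableTripletCover_is2dTree {α : Type} (X : Set α) (hfin : X.Finite)
    (hcard : 3 ≤ X.ncard) (T : XTree α X) (hT : T.IsFullyResolved)
    (L : Set (Sym2 α)) (hL : IsStableTripletCover T L) :
    Is2dTree X L :=
  stableTripletCover_is2dTree_general X hcard T hT L hL
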